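/- arXiv:1809.05706 — 3 statements merged into one kernel-verified Lean document; each statement's English description precedes it below -/
import Mathlib

section
/- Let X ∈ {0,1}, V a random vector, q : 𝒱 → ℝ^K with E[‖q(V)‖²] < ∞, and w(X,V) = ((1,X)' ⊗ q(V)) ∈ ℝ^{2K}. If there is a set 𝒱̃ such that E[1(V ∈ 𝒱̃)q(V)q(V)'] is positive definite and 0 < P(v) < 1 for all v ∈ 𝒱̃, where P(v) = Pr(X = 1 | V = v), then E[w(X,V)w(X,V)'] is positive definite. -/
open MeasureTheory ProbabilityTheory Matrix

/-! Write `c = (c₀, c₁)` for a coefficient vector and `f₀ = c₀ ⬝ q`, `f₁ = (c₀ + c₁) ⬝ q`.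
Since `X` is binary, `c ⬝ w(X, V)` is `f₁ V` on `{X = 1}` and `f₀ V` on `{X = 0}`, so
disintegrating the law of `(V, X)` along `κ` gives
`c' E[w w'] c = E[P(V) f₁(V)² + (1 - P(V)) f₀(V)²]`. If this vanishes then, as `0 < P < 1`
on `𝒱̃`, both `f₀` and `f₁` vanish almost everywhere on `𝒱̃`, and positive definiteness of
`E[1(V ∈ 𝒱̃) q q']` forces `c₀ = c₀ + c₁ = 0`. -/

lemma mul_sq_sum_mul_eq {ι : Type*} [Fintype ι] (w : ℝ) (u x : ι → ℝ) :
    w * (∑ a, x a * u a) ^ 2 = ∑ a, ∑ b, x a * x b * (w * (u a * u b)) := by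
  rw [sq, Finset.sum_mul_sum, Finset.mul_sum]
  refine Finset.sum_congr rfl fun a _ => ?_
  rw [Finset.mul_sum]
  exact Finset.sum_congr rfl fun b _ => by ring

lemma abs_mul_mul_le_mul_sq_add {w : ℝ} (hw : 0 ≤ w) (a b : ℝ) :
    |w * (a * b)| ≤ w * a ^ 2 + w * b ^ 2 := by
  rw [abs_mul, abs_of_nonneg hw, ← mul_add]
  gcongr
  rw [abs_le]
  constructor <;> nlinarith [sq_nonneg (a + b), sq_nonneg (a - b)]

lemma mul_sq_add_one_sub_mul_sq_nonneg {p : ℝ} (hp₀ : 0 ≤ p) (hp₁ : p ≤ 1) (a b : ℝ) :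
    0 ≤ p * a ^ 2 + (1 - p) * b ^ 2 :=
  add_nonneg (mul_nonneg hp₀ (sq_nonneg a)) (mul_nonneg (sub_nonneg.mpr hp₁) (sq_nonneg b))

lemma eq_zero_of_mul_sq_add_one_sub_mul_sq_eq_zero {p a b : ℝ} (hp₀ : 0 < p) (hp₁ : p < 1)
    (h : p * a ^ 2 + (1 - p) * b ^ 2 = 0) : a = 0 ∧ b = 0 := by
  obtain ⟨ha, hb⟩ := (add_eq_zero_iff_of_nonneg (mul_nonneg hp₀.le (sq_nonneg a))
    (mul_nonneg (sub_nonneg.mpr hp₁.le) (sq_nonneg b))).mp h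
  exact ⟨pow_eq_zero_iff two_ne_zero |>.mp ((mul_eq_zero.mp ha).resolve_left hp₀.ne'),
    pow_eq_zero_iff two_ne_zero |>.mp ((mul_eq_zero.mp hb).resolve_left (sub_ne_zero.mpr hp₁.ne'))⟩

noncomputable section WeightedGram

variable {Ω ι : Type*} [MeasurableSpace Ω] {μ : Measure Ω} {w : Ω → ℝ} {u : ι → Ω → ℝ}

def weightedGram (μ : Measure Ω) (w : Ω → ℝ) (u : ι → Ω → ℝ) : Matrix ι ι ℝ :=
  Matrix.of fun a b => ∫ ω, w ω * (u a ω * u b ω) ∂μ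

lemma weightedGram_isHermitian : (weightedGram μ w u).IsHermitian := by
  ext a b
  simp only [weightedGram, conjTranspose_apply, of_apply, star_trivial, mul_comm (u b _)]

lemma integrable_mul_of_sq_le {f g B : Ω → ℝ} (hf : AEStronglyMeasurable f μ)
    (hg : AEStronglyMeasurable g μ) (hB : Integrable B μ) (hfB : ∀ ω, f ω ^ 2 ≤ B ω)
    (hgB : ∀ ω, g ω ^ 2 ≤ B ω) : Integrable (fun ω => f ω * g ω) μ := by
  refine (hB.add hB).mono' (hf.mul hg) (Filter.Eventually.of_forall fun ω => ?_)
  have := abs_mul_mul_le_mul_sq_add zero_le_one (f ω) (g ω)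
  simp only [one_mul] at this
  simp only [Real.norm_eq_abs, Pi.add_apply]
  linarith [hfB ω, hgB ω]

lemma integrable_mul_sq_sum_mul [Fintype ι]
    (hint : ∀ a b, Integrable (fun ω => w ω * (u a ω * u b ω)) μ) (x : ι → ℝ) :
    Integrable (fun ω => w ω * (∑ a, x a * u a ω) ^ 2) μ := by
  simp_rw [mul_sq_sum_mul_eq]
  exact integrable_finsetSum _ fun a _ => integrable_finsetSum _ fun b _ => (hint a b).const_mul _

lemma dotProduct_weightedGram_mulVec [Fintype ι]
    (hint : ∀ a b, Integrable (fun ω => w ω * (u a ω * u b ω)) μ) (x : ι → ℝ) :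
    x ⬝ᵥ (weightedGram μ w u *ᵥ x) = ∫ ω, w ω * (∑ a, x a * u a ω) ^ 2 ∂μ := by
  simp_rw [mul_sq_sum_mul_eq]
  rw [integral_finsetSum _ fun a _ => integrable_finsetSum _ fun b _ => (hint a b).const_mul _]
  refine Finset.sum_congr rfl fun a _ => ?_
  rw [integral_finsetSum _ fun b _ => (hint a b).const_mul _, mulVec, dotProduct, Finset.mul_sum]
  refine Finset.sum_congr rfl fun b _ => ?_
  rw [integral_const_mul, weightedGram, of_apply]
  ring

/-- No measurability of `w` is assumed: it is recovered from the positivity of the diagonal. -/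
lemma integrable_of_weightedGram_posDef [Fintype ι] (hw : ∀ ω, 0 ≤ w ω)
    (hu : ∀ a, AEStronglyMeasurable (u a) μ) (hM : (weightedGram μ w u).PosDef) (a b : ι) :
    Integrable (fun ω => w ω * (u a ω * u b ω)) μ := by
  have hdiag : ∀ c, Integrable (fun ω => w ω * (u c ω * u c ω)) μ := fun c =>
    Integrable.of_integral_ne_zero (hM.diag_pos (i := c)).ne'
  have hsum := (hdiag a).add (hdiag b)
  -- `w * (u a * u b) = (w * u a ^ 2 + w * u b ^ 2) * (u a * u b / (u a ^ 2 + u b ^ 2))`,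
  -- also where `u a = u b = 0`
  have hmeas : AEStronglyMeasurable (fun ω => w ω * (u a ω * u b ω)) μ := by
    have ha := (hu a).aemeasurable
    have hb := (hu b).aemeasurable
    refine (hsum.aestronglyMeasurable.mul
      ((ha.mul hb).div ((ha.mul ha).add (hb.mul hb))).aestronglyMeasurable).congr
      (Filter.Eventually.of_forall fun ω => ?_)
    simp only [Pi.add_apply, Pi.mul_apply, Pi.div_apply]
    by_cases h : u a ω * u a ω + u b ω * u b ω = 0
    · have ha : u a ω = 0 := by nlinarith [mul_self_nonneg (u a ω), mul_self_nonneg (u b ω)]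
      simp [ha]
    · rw [← mul_add, mul_assoc, mul_div_cancel₀ _ h]
  refine hsum.mono' hmeas (Filter.Eventually.of_forall fun ω => ?_)
  simpa only [Real.norm_eq_abs, Pi.add_apply, sq] using
    abs_mul_mul_le_mul_sq_add (hw ω) (u a ω) (u b ω)

lemma eq_zero_of_weightedGram_posDef [Fintype ι] (hw : ∀ ω, 0 ≤ w ω)
    (hu : ∀ a, AEStronglyMeasurable (u a) μ) (hM : (weightedGram μ w u).PosDef) {x : ι → ℝ}
    (hx : ∀ᵐ ω ∂μ, w ω = 0 ∨ ∑ a, x a * u a ω = 0) : x = 0 := by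
  by_contra hx0
  have hpos := hM.dotProduct_mulVec_pos hx0
  rw [star_trivial, dotProduct_weightedGram_mulVec (integrable_of_weightedGram_posDef hw hu hM),
    integral_eq_zero_of_ae (hx.mono fun ω hω => ?_)] at hpos
  · exact hpos.false
  · rcases hω with h | h <;> simp [h]

lemma eq_zero_of_indicator_weightedGram_posDef {𝒱 : Type*} [MeasurableSpace 𝒱] [Fintype ι]
    {V : Ω → 𝒱} (hV : Measurable V) {S : Set 𝒱} {g : ι → 𝒱 → ℝ} (hg : ∀ k, Measurable (g k))
    (hM : (weightedGram μ (fun ω => S.indicator (fun _ => (1 : ℝ)) (V ω))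
      (fun k ω => g k (V ω))).PosDef) {d : ι → ℝ}
    (hd : ∀ᵐ v ∂μ.map V, v ∈ S → ∑ k, d k * g k v = 0) : d = 0 := by
  refine eq_zero_of_weightedGram_posDef (fun ω => Set.indicator_nonneg (fun _ _ => zero_le_one) _)
    (fun k => ((hg k).comp hV).aestronglyMeasurable) hM ?_
  filter_upwards [ae_of_ae_map hV.aemeasurable hd] with ω hω
  by_cases h : V ω ∈ S
  · exact Or.inr (hω h)
  · exact Or.inl (Set.indicator_of_notMem h _)

end WeightedGram

lemma integral_ite_eq {α : Type*} [MeasurableSpace α] [MeasurableSingletonClass α]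
    [DecidableEq α] (ρ : Measure α) [IsProbabilityMeasure ρ] (x₀ : α) (a b : ℝ) :
    ∫ x, (if x = x₀ then a else b) ∂ρ = (ρ {x₀}).toReal * a + (1 - (ρ {x₀}).toReal) * b := by
  have h : (fun x => if x = x₀ then a else b)
      = fun x => b + ({x₀} : Set α).indicator (fun _ => a - b) x := by
    funext x
    by_cases hx : x = x₀ <;> simp [hx]
  rw [h, integral_add (integrable_const b)
      ((integrable_const _).indicator (measurableSet_singleton x₀)),
    integral_indicator_const _ (measurableSet_singleton x₀)]
  simp only [integral_const, measureReal_def, measure_univ, ENNReal.toReal_one, smul_eq_mul,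
    one_mul]
  ring

/- The integrand tests `X = 1` instead of being affine in `X`, so that nothing requires `κ v` to be
carried by `{0, 1}`. -/
lemma integral_ite_eq_one_of_map_eq_compProd {Ω 𝒱 : Type*} [MeasurableSpace Ω] [MeasurableSpace 𝒱]
    {μ : Measure Ω} [IsFiniteMeasure μ] {X : Ω → ℝ} {V : Ω → 𝒱} (hX : Measurable X)
    (hV : Measurable V) {κ : Kernel 𝒱 ℝ} [IsMarkovKernel κ]
    (hdis : μ.map (fun ω => (V ω, X ω)) = (μ.map V) ⊗ₘ κ) {h₀ h₁ : 𝒱 → ℝ}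
    (hh₀ : Measurable h₀) (hh₁ : Measurable h₁)
    (hint : Integrable (fun ω => if X ω = 1 then h₁ (V ω) else h₀ (V ω)) μ) :
    Integrable (fun v => (κ v {1}).toReal * h₁ v + (1 - (κ v {1}).toReal) * h₀ v) (μ.map V) ∧
      ∫ ω, (if X ω = 1 then h₁ (V ω) else h₀ (V ω)) ∂μ
        = ∫ v, (κ v {1}).toReal * h₁ v + (1 - (κ v {1}).toReal) * h₀ v ∂(μ.map V) := by
  set F : 𝒱 × ℝ → ℝ := fun p => if p.2 = 1 then h₁ p.1 else h₀ p.1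
  have hFm : Measurable F :=
    Measurable.ite (measurable_snd (measurableSet_singleton 1)) (hh₁.comp measurable_fst)
      (hh₀.comp measurable_fst)
  have hVX : Measurable fun ω => (V ω, X ω) := hV.prodMk hX
  have hF : Integrable F ((μ.map V) ⊗ₘ κ) := by
    rw [← hdis]
    exact (integrable_map_measure hFm.aestronglyMeasurable hVX.aemeasurable).mpr hint
  have hinner : ∀ v, ∫ x, F (v, x) ∂(κ v)
      = (κ v {1}).toReal * h₁ v + (1 - (κ v {1}).toReal) * h₀ v := fun v =>
    integral_ite_eq (κ v) 1 (h₁ v) (h₀ v)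
  refine ⟨?_, ?_⟩
  -- `Integrable.integral_compProd` is stated for the kernel behind `ν ⊗ₘ κ`
  · simpa only [Kernel.prodMkLeft_apply, hinner, Kernel.const_apply] using
      (show Integrable F ((Kernel.const Unit (μ.map V) ⊗ₖ Kernel.prodMkLeft Unit κ) ())
        from hF).integral_compProd
  · rw [← funext hinner, ← Measure.integral_compProd hF, ← hdis,
      integral_map hVX.aemeasurable hFm.aestronglyMeasurable]

section InteractedRegressors

variable {Ω ι : Type*} {X : Ω → ℝ} {g : ι → Ω → ℝ}

/-- The paper's `w(X, V) = (1, X)' ⊗ q(V)`, taking `g k ω = q (V ω) k`. -/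
def interactedRegressors (X : Ω → ℝ) (g : ι → Ω → ℝ) : Fin 2 × ι → Ω → ℝ :=
  fun a ω => (if a.1 = 0 then 1 else X ω) * g a.2 ω

lemma measurable_interactedRegressors [MeasurableSpace Ω] (hX : Measurable X)
    (hg : ∀ k, Measurable (g k)) (a : Fin 2 × ι) : Measurable (interactedRegressors X g a) := by
  unfold interactedRegressors
  by_cases h : a.1 = 0
  · simpa only [h, ↓reduceIte, one_mul] using hg a.2
  · simp only [h, ↓reduceIte]
    exact hX.mul (hg a.2)

lemma sq_interactedRegressors_le {ω : Ω} (hω : X ω = 0 ∨ X ω = 1) (a : Fin 2 × ι) :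
    interactedRegressors X g a ω ^ 2 ≤ g a.2 ω ^ 2 := by
  have he : (if a.1 = 0 then 1 else X ω) ^ 2 ≤ 1 := by
    split_ifs
    · simp
    · rcases hω with h | h <;> simp [h]
  simpa only [interactedRegressors, mul_pow, one_mul] using
    mul_le_mul_of_nonneg_right he (sq_nonneg (g a.2 ω))

lemma integrable_interactedRegressors_mul [MeasurableSpace Ω] {μ : Measure Ω} [Fintype ι]
    (hX : Measurable X) (hbin : ∀ ω, X ω = 0 ∨ X ω = 1) (hg : ∀ k, Measurable (g k))
    (hg2 : Integrable (fun ω => ∑ k, g k ω ^ 2) μ) (a b : Fin 2 × ι) :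
    Integrable (fun ω => interactedRegressors X g a ω * interactedRegressors X g b ω) μ := by
  have hle : ∀ c ω, interactedRegressors X g c ω ^ 2 ≤ ∑ k, g k ω ^ 2 := fun c ω =>
    (sq_interactedRegressors_le (hbin ω) c).trans
      (Finset.single_le_sum (fun k _ => sq_nonneg (g k ω)) (Finset.mem_univ c.2))
  exact integrable_mul_of_sq_le (measurable_interactedRegressors hX hg a).aestronglyMeasurable
    (measurable_interactedRegressors hX hg b).aestronglyMeasurable hg2 (hle a) (hle b)

lemma sum_mul_interactedRegressors [Fintype ι] (c : Fin 2 × ι → ℝ) {ω : Ω}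
    (hω : X ω = 0 ∨ X ω = 1) :
    ∑ a, c a * interactedRegressors X g a ω
      = if X ω = 1 then ∑ k, (c (0, k) + c (1, k)) * g k ω else ∑ k, c (0, k) * g k ω := by
  simp only [Fintype.sum_prod_type, Fin.sum_univ_two, interactedRegressors, Fin.isValue,
    ↓reduceIte, one_mul, one_ne_zero]
  rcases hω with h | h <;> simp [h, add_mul, Finset.sum_add_distrib]

lemma eq_zero_of_fst_eq_zero_of_add_eq_zero {c : Fin 2 × ι → ℝ}
    (h₀ : (fun k => c (0, k)) = 0) (h₁ : (fun k => c (0, k) + c (1, k)) = 0) : c = 0 := by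
  ext ⟨i, k⟩
  have e₀ : c (0, k) = 0 := congrFun h₀ k
  have e₁ : c (0, k) + c (1, k) = 0 := congrFun h₁ k
  fin_cases i
  · exact e₀
  · show c (1, k) = 0
    linarith

end InteractedRegressors

lemma dotProduct_weightedGram_interactedRegressors_mulVec {Ω 𝒱 : Type*} [MeasurableSpace Ω]
    [MeasurableSpace 𝒱] {μ : Measure Ω} [IsFiniteMeasure μ] {K : ℕ} {X : Ω → ℝ} {V : Ω → 𝒱}
    (hX : Measurable X) (hV : Measurable V) (hbin : ∀ ω, X ω = 0 ∨ X ω = 1) {q : 𝒱 → Fin K → ℝ}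
    (hq : ∀ k, Measurable fun v => q v k) (hq2 : Integrable (fun ω => ∑ k, (q (V ω) k) ^ 2) μ)
    {κ : Kernel 𝒱 ℝ} [IsMarkovKernel κ] (hdis : μ.map (fun ω => (V ω, X ω)) = (μ.map V) ⊗ₘ κ)
    (c : Fin 2 × Fin K → ℝ) :
    let f₀ : 𝒱 → ℝ := fun v => ∑ k, c (0, k) * q v k
    let f₁ : 𝒱 → ℝ := fun v => ∑ k, (c (0, k) + c (1, k)) * q v k
    Integrable (fun v => (κ v {1}).toReal * f₁ v ^ 2 + (1 - (κ v {1}).toReal) * f₀ v ^ 2)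
        (μ.map V) ∧
      c ⬝ᵥ (weightedGram μ 1 (interactedRegressors X fun k ω => q (V ω) k) *ᵥ c)
        = ∫ v, (κ v {1}).toReal * f₁ v ^ 2 + (1 - (κ v {1}).toReal) * f₀ v ^ 2 ∂(μ.map V) := by
  intro f₀ f₁
  set u := interactedRegressors X fun k ω => q (V ω) k
  have hint : ∀ a b, Integrable (fun ω => (1 : Ω → ℝ) ω * (u a ω * u b ω)) μ := fun a b => by
    simpa only [Pi.one_apply, one_mul] using
      integrable_interactedRegressors_mul (g := fun k ω => q (V ω) k) hX hbin
        (fun k => (hq k).comp hV) hq2 a b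
  have hsplit : ∀ ω, (1 : Ω → ℝ) ω * (∑ a, c a * u a ω) ^ 2
      = if X ω = 1 then f₁ (V ω) ^ 2 else f₀ (V ω) ^ 2 := fun ω => by
    rw [Pi.one_apply, one_mul, sum_mul_interactedRegressors c (hbin ω)]
    split_ifs <;> rfl
  obtain ⟨hφ, hEq⟩ := integral_ite_eq_one_of_map_eq_compProd hX hV hdis
    (h₀ := fun v => f₀ v ^ 2) (h₁ := fun v => f₁ v ^ 2) (by fun_prop) (by fun_prop)
    ((integrable_mul_sq_sum_mul hint c).congr (ae_of_all _ hsplit))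
  rw [dotProduct_weightedGram_mulVec hint, integral_congr_ae (ae_of_all _ hsplit), hEq]
  exact ⟨hφ, rfl⟩

/-- binary treatment — positive definiteness of E[w(X,V)w(X,V)'] for
w(X,V) = ((1,X)' ⊗ q(V)) under a propensity score condition on a set 𝒱̃. -/
theorem stmt8 {Ω 𝒱 : Type*} [MeasurableSpace Ω] [MeasurableSpace 𝒱]
    (μ : Measure Ω) [IsProbabilityMeasure μ] {K : ℕ}
    (X : Ω → ℝ) (V : Ω → 𝒱) (hX : Measurable X) (hV : Measurable V)
    (hbin : ∀ ω, X ω = 0 ∨ X ω = 1)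
    (q : 𝒱 → Fin K → ℝ) (hq : ∀ k, Measurable fun v => q v k)
    (hq2 : Integrable (fun ω => ∑ k, (q (V ω) k) ^ 2) μ)
    (κ : Kernel 𝒱 ℝ) [IsMarkovKernel κ]
    (hdis : μ.map (fun ω => (V ω, X ω)) = (μ.map V) ⊗ₘ κ)
    (S : Set 𝒱)
    (hPD : (Matrix.of fun k l =>
        ∫ ω, S.indicator (fun _ => (1 : ℝ)) (V ω) * (q (V ω) k * q (V ω) l) ∂μ).PosDef)
    (hP : ∀ v ∈ S, 0 < (κ v {1}).toReal ∧ (κ v {1}).toReal < 1) :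
    (Matrix.of fun a b : Fin 2 × Fin K =>
      ∫ ω, ((if a.1 = 0 then 1 else X ω) * q (V ω) a.2)
        * ((if b.1 = 0 then 1 else X ω) * q (V ω) b.2) ∂μ).PosDef := by
  have hgram : (Matrix.of fun a b : Fin 2 × Fin K =>
      ∫ ω, ((if a.1 = 0 then 1 else X ω) * q (V ω) a.2)
        * ((if b.1 = 0 then 1 else X ω) * q (V ω) b.2) ∂μ)
      = weightedGram μ 1 (interactedRegressors X fun k ω => q (V ω) k) := by
    simp only [weightedGram, Pi.one_apply, one_mul, interactedRegressors]
  rw [hgram, posDef_iff_dotProduct_mulVec]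
  refine ⟨weightedGram_isHermitian, fun c hc => ?_⟩
  obtain ⟨hφ, hEq⟩ := dotProduct_weightedGram_interactedRegressors_mulVec hX hV hbin hq hq2 hdis c
  set f₀ : 𝒱 → ℝ := fun v => ∑ k, c (0, k) * q v k
  set f₁ : 𝒱 → ℝ := fun v => ∑ k, (c (0, k) + c (1, k)) * q v k
  rw [star_trivial, hEq]
  have hφnn := fun v => mul_sq_add_one_sub_mul_sq_nonneg ENNReal.toReal_nonneg
    (measureReal_le_one (μ := κ v) (s := {1})) (f₁ v) (f₀ v)
  refine (integral_nonneg hφnn).lt_of_ne fun h0 => hc ?_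
  have hf : ∀ᵐ v ∂μ.map V, v ∈ S → f₁ v = 0 ∧ f₀ v = 0 := by
    filter_upwards [(integral_eq_zero_iff_of_nonneg hφnn hφ).mp h0.symm] with v hv hvS
    exact eq_zero_of_mul_sq_add_one_sub_mul_sq_eq_zero (hP v hvS).1 (hP v hvS).2 hv
  exact eq_zero_of_fst_eq_zero_of_add_eq_zero
    (eq_zero_of_indicator_weightedGram_posDef hV hq hPD (hf.mono fun v hv hvS => (hv hvS).2))
    (eq_zero_of_indicator_weightedGram_posDef hV hq hPD (hf.mono fun v hv hvS => (hv hvS).1))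
end

section
/- Suppose Y = p(X)'ε where p(X) ∈ ℝ^J is a known random vector with E[‖p(X)‖²] < ∞, E[Y²] < ∞, and E[ε | X, V] = E[ε | V] =: q₀(V). If E[p(X)p(X)' | V] is nonsingular with probability one, then q₀(V) is identified: any measurable function q̃ with E[Y | X,V] = p(X)'q̃(V) almost surely satisfies q̃(V) = q₀(V) almost surely. -/
open MeasureTheory Matrix

/-!
Conditioning `Y = ∑ j, p_j(X) ε_j` on `(X, V)` gives `p(X)'q₀(V)`, so any `q̃` with
`E[Y | X, V] = p(X)'q̃(V)` satisfies `p(X)'(q̃(V) - q₀(V)) = 0` a.s. Multiplying by `p_i(X)` and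
conditioning on `V` turns this into `E[p(X)p(X)' | V] (q̃(V) - q₀(V)) = 0`, and the Gram matrix
is a.s. invertible. Since the `p_j(X)` are unbounded, the products are pulled out of the
conditional expectations on the sets where the measurable factors are bounded.
-/

section

variable {Ω ι : Type*} {m m₀ : MeasurableSpace Ω} {μ : Measure Ω} [IsFiniteMeasure μ]

/-- Unlike Mathlib's pull-out lemmas, the `m`-measurable factors need not be bounded, nor the
individual products integrable. -/
theorem condExp_sum_mul_of_stronglyMeasurable (hm : m ≤ m₀) (s : Finset ι) {g f : ι → Ω → ℝ}
    (hg : ∀ i, StronglyMeasurable[m] (g i)) (hf : ∀ i, Integrable (f i) μ)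
    (hgf : Integrable (fun ω => ∑ i ∈ s, g i ω * f i ω) μ) :
    μ[fun ω => ∑ i ∈ s, g i ω * f i ω|m] =ᵐ[μ] fun ω => ∑ i ∈ s, g i ω * μ[f i|m] ω := by
  set C : ℕ → Set Ω := fun n => ⋂ i ∈ s, {ω | ‖g i ω‖ ≤ n}
  have hC : ∀ n, MeasurableSet[m] (C n) := fun n =>
    .biInter s.countable_toSet fun i _ => (hg i).norm.measurable measurableSet_Iic
  have hbound : ∀ n i, i ∈ s → ∀ ω, ‖(C n).indicator (g i) ω‖ ≤ n := by
    intro n i hi ω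
    by_cases hω : ω ∈ C n
    · rw [Set.indicator_of_mem hω]
      exact Set.mem_iInter₂.1 hω i hi
    · simp [Set.indicator_of_notMem hω]
  have hlocal : ∀ n, ∀ᵐ ω ∂μ, ω ∈ C n →
      μ[fun ω => ∑ i ∈ s, g i ω * f i ω|m] ω = ∑ i ∈ s, g i ω * μ[f i|m] ω := by
    intro n
    have hind : (C n).indicator (fun ω => ∑ i ∈ s, g i ω * f i ω)
        = ∑ i ∈ s, (C n).indicator (g i) * f i := by
      ext ω
      by_cases hω : ω ∈ C n <;> simp [hω]
    have hterm : ∀ i ∈ s,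
        μ[(C n).indicator (g i) * f i|m] =ᵐ[μ] (C n).indicator (g i) * μ[f i|m] :=
      fun i hi => condExp_stronglyMeasurable_mul_of_bound hm ((hg i).indicator (hC n)) (hf i) n
        (.of_forall (hbound n i hi))
    have hsum := (condExp_indicator hgf (hC n)).symm.trans
      ((condExp_congr_ae (.of_forall (congrFun hind))).trans
        (condExp_finsetSum (fun i hi => (hf i).bdd_mul
          (((hg i).indicator (hC n)).mono hm).aestronglyMeasurable
          (.of_forall (hbound n i hi))) m))
    filter_upwards [hsum, Filter.eventually_all_finset s |>.2 hterm] with ω hω hterms hωC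
    rw [Set.indicator_of_mem hωC] at hω
    rw [hω, Finset.sum_apply]
    refine Finset.sum_congr rfl fun i hi => ?_
    exact (hterms i hi).trans (by simp [hωC])
  filter_upwards [ae_all_iff.2 hlocal] with ω hω
  obtain ⟨n, hn⟩ := exists_nat_ge (∑ i ∈ s, ‖g i ω‖)
  exact hω n (Set.mem_iInter₂.2 fun i hi =>
    (Finset.single_le_sum (fun j _ => norm_nonneg (g j ω)) hi).trans hn)

theorem ae_eq_zero_of_isUnit_condExp_gram [Fintype ι] [DecidableEq ι] (hm : m ≤ m₀)
    {P d : ι → Ω → ℝ} (hP : ∀ i j, Integrable (fun ω => P i ω * P j ω) μ)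
    (hd : ∀ j, StronglyMeasurable[m] (d j)) (hPd : ∀ᵐ ω ∂μ, ∑ j, P j ω * d j ω = 0)
    (hgram : ∀ᵐ ω ∂μ, IsUnit (Matrix.of fun i j => μ[fun ω' => P i ω' * P j ω'|m] ω)) :
    ∀ᵐ ω ∂μ, (fun j => d j ω) = 0 := by
  have hrow : ∀ i, ∀ᵐ ω ∂μ, ∑ j, d j ω * μ[fun ω' => P i ω' * P j ω'|m] ω = 0 := by
    intro i
    have hzero : (fun ω => ∑ j, d j ω * (P i ω * P j ω)) =ᵐ[μ] 0 := by
      filter_upwards [hPd] with ω hω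
      simp only [Pi.zero_apply]
      rw [← mul_zero (P i ω), ← hω, Finset.mul_sum]
      exact Finset.sum_congr rfl fun j _ => by ring
    have hint : Integrable (fun ω => ∑ j, d j ω * (P i ω * P j ω)) μ :=
      (integrable_congr hzero).2 (integrable_zero _ _ μ)
    exact (condExp_sum_mul_of_stronglyMeasurable hm _ hd (hP i) hint).symm.trans
      ((condExp_congr_ae hzero).trans (condExp_zero (m := m)).eventuallyEq)
  filter_upwards [ae_all_iff.2 hrow, hgram] with ω hrowω hunit
  refine Matrix.mulVec_injective_iff_isUnit.2 hunit ?_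
  ext i
  rw [Matrix.mulVec_zero]
  exact (Finset.sum_congr rfl fun j _ => mul_comm _ _).trans (hrowω i)

end

theorem integrable_mul_of_integrable_sum_sq {Ω ι : Type*} [MeasurableSpace Ω] {μ : Measure Ω}
    [Fintype ι] {P : ι → Ω → ℝ} (hP : ∀ i, AEStronglyMeasurable (P i) μ)
    (hsq : Integrable (fun ω => ∑ j, P j ω ^ 2) μ) (i j : ι) :
    Integrable (fun ω => P i ω * P j ω) μ := by
  have hL2 : ∀ i, MemLp (P i) 2 μ := fun i =>
    (memLp_two_iff_integrable_sq (hP i)).2 <| hsq.mono' ((hP i).pow 2) <| .of_forall fun ω => by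
      rw [Real.norm_of_nonneg (sq_nonneg _)]
      exact Finset.single_le_sum (f := fun j => P j ω ^ 2) (fun j _ => sq_nonneg _)
        (Finset.mem_univ i)
  exact (hL2 i).integrable_mul (hL2 j)

theorem ae_eq_of_condExp_sum_mul_eq {Ω ι : Type*} [Fintype ι] [DecidableEq ι]
    {mV m m₀ : MeasurableSpace Ω} {μ : Measure Ω} [IsFiniteMeasure μ] (hmV : mV ≤ m) (hm : m ≤ m₀)
    {P ε Q₀ Q : ι → Ω → ℝ} (hP : ∀ j, StronglyMeasurable[m] (P j))
    (hPP : ∀ i j, Integrable (fun ω => P i ω * P j ω) μ) (hε : ∀ j, Integrable (ε j) μ)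
    (hPε : Integrable (fun ω => ∑ j, P j ω * ε j ω) μ)
    (hQ₀ : ∀ j, StronglyMeasurable[mV] (Q₀ j)) (hQ : ∀ j, StronglyMeasurable[mV] (Q j))
    (hce : ∀ j, μ[ε j|m] =ᵐ[μ] Q₀ j)
    (hgram : ∀ᵐ ω ∂μ, IsUnit (Matrix.of fun i j => μ[fun ω' => P i ω' * P j ω'|mV] ω))
    (hPQ : μ[fun ω => ∑ j, P j ω * ε j ω|m] =ᵐ[μ] fun ω => ∑ j, P j ω * Q j ω) :
    ∀ᵐ ω ∂μ, ∀ j, Q j ω = Q₀ j ω := by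
  have hPQ₀ : μ[fun ω => ∑ j, P j ω * ε j ω|m] =ᵐ[μ] fun ω => ∑ j, P j ω * Q₀ j ω := by
    filter_upwards [condExp_sum_mul_of_stronglyMeasurable hm _ hP hε hPε, ae_all_iff.2 hce]
      with ω hω hceω
    simp only [hω, hceω]
  have hPd : ∀ᵐ ω ∂μ, ∑ j, P j ω * (Q j ω - Q₀ j ω) = 0 := by
    filter_upwards [hPQ.symm.trans hPQ₀] with ω hω
    simp only [mul_sub, Finset.sum_sub_distrib, hω, sub_self]
  filter_upwards [ae_eq_zero_of_isUnit_condExp_gram (hmV.trans hm) hPP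
    (fun j => (hQ j).sub (hQ₀ j)) hPd hgram] with ω hω j
  exact sub_eq_zero.1 (congrFun hω j)

/-- identification of the coefficient function q₀(V) in the heterogeneous
coefficients model Y = p(X)'ε when E[p(X)p(X)' | V] is a.s. nonsingular. -/
theorem stmt9 {Ω 𝒳 𝒱 : Type*} [MeasurableSpace Ω] [MeasurableSpace 𝒳] [MeasurableSpace 𝒱]
    (μ : Measure Ω) [IsProbabilityMeasure μ] {J : ℕ}
    (X : Ω → 𝒳) (V : Ω → 𝒱) (hX : Measurable X) (hV : Measurable V)
    (p : 𝒳 → Fin J → ℝ) (hp : ∀ j, Measurable fun x => p x j)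
    (ε : Ω → Fin J → ℝ) (hε : ∀ j, Integrable (fun ω => ε ω j) μ)
    (Y : Ω → ℝ) (hYdef : ∀ ω, Y ω = ∑ j, p (X ω) j * ε ω j)
    (hY2 : Integrable (fun ω => (Y ω) ^ 2) μ)
    (hp2 : Integrable (fun ω => ∑ j, (p (X ω) j) ^ 2) μ)
    (q₀ : 𝒱 → Fin J → ℝ) (hq₀ : ∀ j, Measurable fun v => q₀ v j)
    (hce : ∀ j,
      (μ[fun ω => ε ω j|MeasurableSpace.comap (fun ω => (X ω, V ω)) inferInstance])
        =ᵐ[μ] fun ω => q₀ (V ω) j)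
    (hnonsing : ∀ᵐ ω ∂μ,
      IsUnit (Matrix.of fun i j =>
        (μ[fun ω' => p (X ω') i * p (X ω') j|MeasurableSpace.comap V inferInstance]) ω)) :
    ∀ qt : 𝒱 → Fin J → ℝ, (∀ j, Measurable fun v => qt v j) →
      ((μ[Y|MeasurableSpace.comap (fun ω => (X ω, V ω)) inferInstance])
        =ᵐ[μ] fun ω => ∑ j, p (X ω) j * qt (V ω) j) →
      ∀ᵐ ω ∂μ, qt (V ω) = q₀ (V ω) := by
  intro qt hqt hYc
  have hXV : Measurable[MeasurableSpace.comap (fun ω => (X ω, V ω)) inferInstance]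
      fun ω => (X ω, V ω) := Measurable.of_comap_le le_rfl
  have hmXV := (hX.prodMk hV).comap_le
  have hP : ∀ j, StronglyMeasurable[MeasurableSpace.comap (fun ω => (X ω, V ω)) inferInstance]
      fun ω => p (X ω) j := fun j => ((hp j).comp (measurable_fst.comp hXV)).stronglyMeasurable
  have hVq : ∀ q : 𝒱 → Fin J → ℝ, (∀ j, Measurable fun v => q v j) →
      ∀ j, StronglyMeasurable[MeasurableSpace.comap V inferInstance] fun ω => q (V ω) j :=
    fun q hq j => ((hq j).comp (Measurable.of_comap_le le_rfl)).stronglyMeasurable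
  have hYeq : Y = fun ω => ∑ j, p (X ω) j * ε ω j := funext hYdef
  have hYint : Integrable Y μ := by
    refine ((memLp_two_iff_integrable_sq ?_).2 hY2).integrable one_le_two
    rw [hYeq]
    exact Finset.aestronglyMeasurable_fun_sum _ fun j _ =>
      ((hP j).mono hmXV).aestronglyMeasurable.mul (hε j).1
  rw [hYeq] at hYint hYc
  filter_upwards [ae_eq_of_condExp_sum_mul_eq (measurable_snd.comp hXV).comap_le hmXV hP
    (integrable_mul_of_integrable_sum_sq (fun j => ((hP j).mono hmXV).aestronglyMeasurable) hp2)
    hε hYint (hVq q₀ hq₀) (hVq qt hqt) hce hnonsing hYc] with ω hω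
  exact funext hω
end

section
/- Let (X,V) be random variables and p : 𝒳 → ℝ^J, q : 𝒱 → ℝ^K measurable with E[(p(X)⊗q(V))(p(X)⊗q(V))'] finite. Suppose the joint distribution of (X,V) dominates a product probability measure μ×ρ (i.e., P_{(X,V)} ≥ c·(μ×ρ) for some c > 0) such that ∫ p p' dμ and ∫ q q' dρ are positive definite. Then E[(p(X)⊗q(V))(p(X)⊗q(V))'] is positive definite. -/
/-!
The quadratic form of a second-moment matrix `∫ f f'` at `x` is `∫ (x'f)²`, which is monotone
in the measure because the integrand is nonnegative. Hence domination `c • (μ × ρ) ≤ P_(X,V)`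
bounds the form of `E[(p⊗q)(p⊗q)']` below by `c` times the form of `∫ (p⊗q)(p⊗q)' d(μ × ρ)`
(the domination also supplies the integrability under `μ × ρ`). By Fubini the latter matrix is
the Kronecker product of the two marginal second-moment matrices, so it is positive definite.
-/

open MeasureTheory Matrix
open scoped ENNReal Kronecker

section SecondMoment

variable {α β ι κ : Type*} [MeasurableSpace α] [MeasurableSpace β]

noncomputable def secondMoment (ν : Measure α) (f : α → ι → ℝ) : Matrix ι ι ℝ :=
  of fun a b => ∫ z, f z a * f z b ∂ν

lemma secondMoment_isHermitian (ν : Measure α) (f : α → ι → ℝ) :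
    (secondMoment ν f).IsHermitian :=
  IsHermitian.ext fun a b => by simp only [secondMoment, of_apply, star_trivial, mul_comm]

lemma secondMoment_map {T : α → β} {ν : Measure α} (hT : AEMeasurable T ν)
    {f : β → ι → ℝ} (hf : ∀ a, Measurable fun y => f y a) :
    secondMoment (ν.map T) f = secondMoment ν fun z => f (T z) := by
  ext a b
  exact integral_map hT ((hf a).mul (hf b)).aestronglyMeasurable

lemma secondMoment_prod [Fintype ι] [Fintype κ] (μ : Measure α) (ρ : Measure β) [SFinite μ]
    [SFinite ρ] (p : α → ι → ℝ) (q : β → κ → ℝ) :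
    secondMoment (μ.prod ρ) (fun z (a : ι × κ) => p z.1 a.1 * q z.2 a.2) =
      secondMoment μ p ⊗ₖ secondMoment ρ q := by
  ext a b
  simp only [secondMoment, kroneckerMap_apply, of_apply]
  rw [← integral_prod_mul]
  exact integral_congr_ae (ae_of_all _ fun z => by ring)

variable [Fintype ι]

lemma sq_sum_mul_eq_sum_sum (x y : ι → ℝ) :
    (∑ a, x a * y a) ^ 2 = ∑ a, ∑ b, x a * x b * (y a * y b) := by
  rw [sq, Finset.sum_mul_sum]
  exact Finset.sum_congr rfl fun a _ => Finset.sum_congr rfl fun b _ => by ring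

lemma integrable_sq_sum_mul {ν : Measure α} {f : α → ι → ℝ}
    (hf : ∀ a b, Integrable (fun z => f z a * f z b) ν) (x : ι → ℝ) :
    Integrable (fun z => (∑ a, x a * f z a) ^ 2) ν := by
  simp only [sq_sum_mul_eq_sum_sum]
  exact integrable_finsetSum _ fun a _ =>
    integrable_finsetSum _ fun b _ => (hf a b).const_mul _

lemma dotProduct_secondMoment_mulVec {ν : Measure α} {f : α → ι → ℝ}
    (hf : ∀ a b, Integrable (fun z => f z a * f z b) ν) (x : ι → ℝ) :
    x ⬝ᵥ secondMoment ν f *ᵥ x = ∫ z, (∑ a, x a * f z a) ^ 2 ∂ν := by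
  simp only [sq_sum_mul_eq_sum_sum]
  rw [integral_finsetSum _ fun a _ =>
    integrable_finsetSum _ fun b _ => (hf a b).const_mul _]
  refine Finset.sum_congr rfl fun a _ => ?_
  rw [integral_finsetSum _ fun b _ => (hf a b).const_mul _, mulVec, dotProduct,
    Finset.mul_sum]
  exact Finset.sum_congr rfl fun b _ => by
    rw [integral_const_mul, secondMoment, of_apply]
    ring

lemma PosDef.secondMoment_of_smul_le {ν ν' : Measure α} {f : α → ι → ℝ} {c : ℝ≥0∞}
    (hc : c ≠ 0) (hc_top : c ≠ ∞) (hle : c • ν ≤ ν')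
    (hf : ∀ a b, Integrable (fun z => f z a * f z b) ν')
    (hpos : (secondMoment ν f).PosDef) : (secondMoment ν' f).PosDef := by
  have hfν : ∀ a b, Integrable (fun z => f z a * f z b) ν := fun a b =>
    (integrable_smul_measure hc hc_top).1 ((hf a b).mono_measure hle)
  refine posDef_iff_dotProduct_mulVec.2 ⟨secondMoment_isHermitian ν' f, fun x hx => ?_⟩
  have hxν := (posDef_iff_dotProduct_mulVec.1 hpos).2 hx
  simp only [star_trivial, dotProduct_secondMoment_mulVec hfν] at hxν
  simp only [star_trivial, dotProduct_secondMoment_mulVec hf]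
  calc (0 : ℝ) < c.toReal * ∫ z, (∑ a, x a * f z a) ^ 2 ∂ν :=
        mul_pos (ENNReal.toReal_pos hc hc_top) hxν
    _ = ∫ z, (∑ a, x a * f z a) ^ 2 ∂(c • ν) := (integral_smul_measure _ _).symm
    _ ≤ ∫ z, (∑ a, x a * f z a) ^ 2 ∂ν' :=
        integral_mono_measure hle (ae_of_all _ fun z => sq_nonneg _)
          (integrable_sq_sum_mul hf x)

end SecondMoment

lemma ne_top_of_smul_measure_le {α : Type*} [MeasurableSpace α] {ν ν' : Measure α}
    [NeZero ν] [IsFiniteMeasure ν'] {c : ℝ≥0∞} (hle : c • ν ≤ ν') : c ≠ ∞ := by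
  rintro rfl
  have h := hle Set.univ
  rw [Measure.smul_apply, smul_eq_mul,
    ENNReal.top_mul (Measure.measure_univ_ne_zero.2 (NeZero.ne ν))] at h
  exact measure_ne_top ν' _ (top_le_iff.1 h)

theorem stmt12_general {Ω 𝒳 𝒱 : Type*} [MeasurableSpace Ω] [MeasurableSpace 𝒳] [MeasurableSpace 𝒱]
    (P : Measure Ω) [IsProbabilityMeasure P] {J K : ℕ}
    (X : Ω → 𝒳) (V : Ω → 𝒱) (hX : Measurable X) (hV : Measurable V)
    (p : 𝒳 → Fin J → ℝ) (q : 𝒱 → Fin K → ℝ)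
    (hp : ∀ j, Measurable fun x => p x j) (hq : ∀ k, Measurable fun v => q v k)
    (hint : ∀ a b : Fin J × Fin K,
      Integrable (fun ω => (p (X ω) a.1 * q (V ω) a.2) * (p (X ω) b.1 * q (V ω) b.2)) P)
    (μ : Measure 𝒳) (ρ : Measure 𝒱) [IsProbabilityMeasure μ] [IsProbabilityMeasure ρ]
    (c : ℝ≥0∞) (hc : 0 < c)
    (hdom : c • (μ.prod ρ) ≤ P.map fun ω => (X ω, V ω))
    (hμPD : (Matrix.of fun i j => ∫ x, p x i * p x j ∂μ).PosDef)
    (hρPD : (Matrix.of fun k l => ∫ v, q v k * q v l ∂ρ).PosDef) :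
    (Matrix.of fun a b : Fin J × Fin K =>
      ∫ ω, (p (X ω) a.1 * q (V ω) a.2) * (p (X ω) b.1 * q (V ω) b.2) ∂P).PosDef := by
  have hT : AEMeasurable (fun ω => (X ω, V ω)) P := (hX.prodMk hV).aemeasurable
  have hpq : ∀ a : Fin J × Fin K, Measurable fun z : 𝒳 × 𝒱 => p z.1 a.1 * q z.2 a.2 :=
    fun a => ((hp a.1).comp measurable_fst).mul ((hq a.2).comp measurable_snd)
  have hint_map : ∀ a b : Fin J × Fin K, Integrable
      (fun z : 𝒳 × 𝒱 => (p z.1 a.1 * q z.2 a.2) * (p z.1 b.1 * q z.2 b.2))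
      (P.map fun ω => (X ω, V ω)) := fun a b =>
    (integrable_map_measure ((hpq a).mul (hpq b)).aestronglyMeasurable hT).2 (hint a b)
  have hprod : (secondMoment (μ.prod ρ) fun z (a : Fin J × Fin K) =>
      p z.1 a.1 * q z.2 a.2).PosDef := by
    rw [secondMoment_prod]
    exact hμPD.kronecker hρPD
  have hmap := PosDef.secondMoment_of_smul_le hc.ne' (ne_top_of_smul_measure_le hdom) hdom
    hint_map hprod
  rwa [secondMoment_map hT hpq] at hmap

/-- domination of the joint law of (X,V) by a product measure with positive
definite marginal second-moment matrices implies E[(p⊗q)(p⊗q)'] is positive definite. -/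
theorem stmt12 {Ω 𝒳 𝒱 : Type*} [MeasurableSpace Ω] [MeasurableSpace 𝒳] [MeasurableSpace 𝒱]
    (P : Measure Ω) [IsProbabilityMeasure P] {J K : ℕ}
    (X : Ω → 𝒳) (V : Ω → 𝒱) (hX : Measurable X) (hV : Measurable V)
    (p : 𝒳 → Fin J → ℝ) (q : 𝒱 → Fin K → ℝ)
    (hp : ∀ j, Measurable fun x => p x j) (hq : ∀ k, Measurable fun v => q v k)
    (hint : ∀ a b : Fin J × Fin K,
      Integrable (fun ω => (p (X ω) a.1 * q (V ω) a.2) * (p (X ω) b.1 * q (V ω) b.2)) P)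
    (μ : Measure 𝒳) (ρ : Measure 𝒱) [IsProbabilityMeasure μ] [IsProbabilityMeasure ρ]
    (hpμ : Integrable (fun x => ∑ j, (p x j) ^ 2) μ)
    (hqρ : Integrable (fun v => ∑ k, (q v k) ^ 2) ρ)
    (c : ℝ≥0∞) (hc : 0 < c)
    (hdom : c • (μ.prod ρ) ≤ P.map fun ω => (X ω, V ω))
    (hμPD : (Matrix.of fun i j => ∫ x, p x i * p x j ∂μ).PosDef)
    (hρPD : (Matrix.of fun k l => ∫ v, q v k * q v l ∂ρ).PosDef) :
    (Matrix.of fun a b : Fin J × Fin K =>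
      ∫ ω, (p (X ω) a.1 * q (V ω) a.2) * (p (X ω) b.1 * q (V ω) b.2) ∂P).PosDef :=
  stmt12_general P X V hX hV p q hp hq hint μ ρ c hc hdom hμPD hρPD
end
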